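/- arXiv:2605.07691 — 3 statements merged into one kernel-verified Lean document; each statement's English description precedes it below -/
import Mathlib

section
/- Let p : ℝ → ℝ be continuous, convex and nondecreasing on (0,∞). Define Π(a,b) := (p(a)+p(b))/2 - (a·b/(a-b))·∫_b^a p(s)/s² ds for a ≠ b with a, b > 0, and Π(a,a) := 0. Then Π(a,b) ≥ 0 for all a, b > 0. -/
/-- `2 x log x ≤ x² - 1` for `x ≥ 1`. -/
lemma two_mul_log_le_sq_sub_one (x : ℝ) (hx : 1 ≤ x) :
    2 * x * Real.log x ≤ x ^ 2 - 1 := by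
  have hmono : MonotoneOn (fun t : ℝ => t ^ 2 - 1 - 2 * t * Real.log t) (Set.Ici 1) := by
    apply monotoneOn_of_deriv_nonneg (convex_Ici 1)
    · apply ContinuousOn.sub
      · exact (continuousOn_pow 2).sub continuousOn_const
      · apply ContinuousOn.mul (by fun_prop)
        exact Real.continuousOn_log.mono (fun t ht => by
          simp only [Set.mem_compl_iff, Set.mem_singleton_iff]
          exact ne_of_gt (lt_of_lt_of_le one_pos ht))
    · rw [interior_Ici]
      intro t ht
      have ht0 : t ≠ 0 := ne_of_gt (lt_trans one_pos ht)
      exact (((differentiable_id.pow 2).sub_const 1).differentiableAt.sub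
        (((differentiable_const (2:ℝ)).mul differentiable_id).differentiableAt.mul
          (Real.differentiableAt_log ht0))).differentiableWithinAt
    · rw [interior_Ici]
      intro t ht
      have ht1 : (1:ℝ) < t := ht
      have ht0 : (0:ℝ) < t := lt_trans one_pos ht1
      have hd : HasDerivAt (fun t : ℝ => t ^ 2 - 1 - 2 * t * Real.log t)
          (2 * t - (2 * Real.log t + 2)) t := by
        have h1 : HasDerivAt (fun t : ℝ => t ^ 2 - 1) (2 * t) t := by
          simpa using ((hasDerivAt_pow 2 t).sub_const 1)
        have h2 : HasDerivAt (fun t : ℝ => 2 * t * Real.log t)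
            (2 * Real.log t + 2) t := by
          have := ((hasDerivAt_id t).const_mul (2:ℝ)).mul (Real.hasDerivAt_log (ne_of_gt ht0))
          refine this.congr_deriv ?_
          rw [id_eq, mul_one, mul_assoc, mul_inv_cancel₀ ht0.ne', mul_one]
        exact h1.sub h2
      rw [hd.deriv]
      have := Real.log_le_sub_one_of_pos ht0
      linarith
  have h1 : (fun t : ℝ => t ^ 2 - 1 - 2 * t * Real.log t) 1 ≤
      (fun t : ℝ => t ^ 2 - 1 - 2 * t * Real.log t) x :=
    hmono (Set.self_mem_Ici) hx hx
  simp [Real.log_one] at h1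
  linarith

/-- Logarithmic mean ≤ arithmetic mean, in product form. -/
lemma log_mean_le_arith (a b : ℝ) (hb : 0 < b) (hba : b ≤ a) :
    2 * a * b * (Real.log a - Real.log b) ≤ a ^ 2 - b ^ 2 := by
  have ha : 0 < a := lt_of_lt_of_le hb hba
  have hx : 1 ≤ a / b := (one_le_div hb).2 hba
  have h1 := two_mul_log_le_sq_sub_one (a / b) hx
  rw [Real.log_div (ne_of_gt ha) (ne_of_gt hb)] at h1
  have h2 : (0:ℝ) ≤ b ^ 2 := sq_nonneg b
  have h3 := mul_le_mul_of_nonneg_right h1 h2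
  have e1 : 2 * (a / b) * (Real.log a - Real.log b) * b ^ 2
      = 2 * a * b * (Real.log a - Real.log b) := by
    field_simp
  have e2 : ((a / b) ^ 2 - 1) * b ^ 2 = a ^ 2 - b ^ 2 := by
    field_simp
  calc 2 * a * b * (Real.log a - Real.log b) = _ := e1.symm
    _ ≤ ((a / b) ^ 2 - 1) * b ^ 2 := h3
    _ = a ^ 2 - b ^ 2 := e2

lemma pressure_key (p : ℝ → ℝ)
    (hpc : ContinuousOn p (Set.Ioi 0)) (hpconv : ConvexOn ℝ (Set.Ioi 0) p)
    (hpmono : MonotoneOn p (Set.Ioi 0)) (a b : ℝ) (hb : 0 < b) (hba : b < a) :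
    (a * b / (a - b)) * ∫ s in b..a, p s / s ^ 2 ≤ (p a + p b) / 2 := by
  have ha : 0 < a := lt_trans hb hba
  have hD : (0:ℝ) < a - b := by linarith
  have haI : a ∈ Set.Ioi (0:ℝ) := ha
  have hbI : b ∈ Set.Ioi (0:ℝ) := hb
  set m : ℝ := (p a - p b) / (a - b) with hm_def
  have hpab : p b ≤ p a := hpmono hbI haI hba.le
  have hm : 0 ≤ m := div_nonneg (by linarith) hD.le
  have hpa : p a - p b = m * (a - b) := by
    rw [hm_def]; field_simp
  -- subset fact
  have hsub : Set.Icc b a ⊆ Set.Ioi (0:ℝ) := fun x hx => lt_of_lt_of_le hb hx.1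
  -- pointwise chord bound
  have hpt : ∀ s ∈ Set.Icc b a, p s ≤ p b + m * (s - b) := by
    intro s hs
    have hw1 : (0:ℝ) ≤ (a - s) / (a - b) := div_nonneg (by linarith [hs.2]) hD.le
    have hw2 : (0:ℝ) ≤ (s - b) / (a - b) := div_nonneg (by linarith [hs.1]) hD.le
    have hw : (a - s) / (a - b) + (s - b) / (a - b) = 1 := by
      field_simp
      ring
    have hcv := hpconv.2 hbI haI hw1 hw2 hw
    simp only [smul_eq_mul] at hcv
    have he : (a - s) / (a - b) * b + (s - b) / (a - b) * a = s := by
      rw [div_mul_eq_mul_div, div_mul_eq_mul_div, ← add_div,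
        div_eq_iff hD.ne']
      ring
    rw [he] at hcv
    have he2 : (a - s) / (a - b) * p b + (s - b) / (a - b) * p a
        = p b + m * (s - b) := by
      rw [hm_def]
      field_simp
      ring
    linarith [he2 ▸ hcv]
  -- integrability
  have hcont1 : ContinuousOn (fun s : ℝ => p s / s ^ 2) (Set.Icc b a) := by
    apply ContinuousOn.div (hpc.mono hsub) (by fun_prop)
    exact fun x hx => pow_ne_zero 2 (ne_of_gt (hsub hx))
  have hInt1 : IntervalIntegrable (fun s : ℝ => p s / s ^ 2) MeasureTheory.volume b a := by
    apply ContinuousOn.intervalIntegrable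
    rwa [Set.uIcc_of_le hba.le]
  have hcont2 : ContinuousOn (fun s : ℝ => (p b + m * (s - b)) / s ^ 2) (Set.Icc b a) := by
    apply ContinuousOn.div (by fun_prop) (by fun_prop)
    exact fun x hx => pow_ne_zero 2 (ne_of_gt (hsub hx))
  have hInt2 : IntervalIntegrable (fun s : ℝ => (p b + m * (s - b)) / s ^ 2)
      MeasureTheory.volume b a := by
    apply ContinuousOn.intervalIntegrable
    rwa [Set.uIcc_of_le hba.le]
  -- integral comparison
  have hmono : (∫ s in b..a, p s / s ^ 2) ≤ ∫ s in b..a, (p b + m * (s - b)) / s ^ 2 := by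
    apply intervalIntegral.integral_mono_on hba.le hInt1 hInt2
    intro s hs
    have hs2 : (0:ℝ) < s ^ 2 := pow_pos (hsub hs) 2
    gcongr
    exact hpt s hs
  -- FTC computation
  have hftc : (∫ s in b..a, (p b + m * (s - b)) / s ^ 2)
      = (-(p b) * a⁻¹ + m * (Real.log a + b * a⁻¹))
        - (-(p b) * b⁻¹ + m * (Real.log b + b * b⁻¹)) := by
    apply intervalIntegral.integral_eq_sub_of_hasDerivAt
    · intro s hs
      rw [Set.uIcc_of_le hba.le] at hs
      have hs0 : s ≠ 0 := ne_of_gt (hsub hs)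
      have h := ((hasDerivAt_inv hs0).const_mul (-(p b))).add
        (((Real.hasDerivAt_log hs0).add ((hasDerivAt_inv hs0).const_mul b)).const_mul m)
      convert h using 1
      · ext y; simp only [Pi.add_apply]
      · field_simp; ring
    · exact hInt2
  -- put together
  have hc : (0:ℝ) ≤ a * b / (a - b) := le_of_lt (by positivity)
  have step1 : (a * b / (a - b)) * ∫ s in b..a, p s / s ^ 2
      ≤ (a * b / (a - b)) * ((-(p b) * a⁻¹ + m * (Real.log a + b * a⁻¹))
        - (-(p b) * b⁻¹ + m * (Real.log b + b * b⁻¹))) := by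
    apply mul_le_mul_of_nonneg_left _ hc
    rw [← hftc]; exact hmono
  refine le_trans step1 ?_
  rw [div_mul_eq_mul_div, div_le_iff₀ hD]
  have hexp : a * b * ((-(p b) * a⁻¹ + m * (Real.log a + b * a⁻¹))
      - (-(p b) * b⁻¹ + m * (Real.log b + b * b⁻¹)))
      = p b * (a - b) + m * (a * b * (Real.log a - Real.log b)) - m * b * (a - b) := by
    field_simp
    ring
  rw [hexp]
  have hL := log_mean_le_arith a b hb hba.le
  nlinarith [mul_le_mul_of_nonneg_left hL hm, hpa]

theorem pressure_jump_Pi_nonneg (p : ℝ → ℝ)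
    (hpc : ContinuousOn p (Set.Ioi 0)) (hpconv : ConvexOn ℝ (Set.Ioi 0) p)
    (hpmono : MonotoneOn p (Set.Ioi 0)) (a b : ℝ) (ha : 0 < a) (hb : 0 < b) :
    0 ≤ if a = b then (0:ℝ)
        else (p a + p b) / 2 - (a * b / (a - b)) * ∫ s in b..a, p s / s ^ 2 := by
  split_ifs with h
  · exact le_refl 0
  · rcases lt_or_gt_of_ne h with hab | hba
    · -- a < b
      have key := pressure_key p hpc hpconv hpmono b a ha hab
      have hsym : (a * b / (a - b)) * ∫ s in b..a, p s / s ^ 2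
          = (b * a / (b - a)) * ∫ s in a..b, p s / s ^ 2 := by
        rw [intervalIntegral.integral_symm, show a - b = -(b - a) by ring, div_neg]
        ring
      rw [hsym]
      linarith
    · have key := pressure_key p hpc hpconv hpmono a b hb hba
      linarith
end

section
/- For positive reals a, b with a ≠ b and vectors v, w ∈ ℝ^d, and p : ℝ → ℝ continuous, the following identity holds: a·b·[ a·b·|v-w|²·∫₀¹ s(1-s)/(s·a+(1-s)·b)³ ds + ∫₀¹ (s·p(a)+(1-s)·p(b) - p(s·a+(1-s)·b))/(s·a+(1-s)·b)² ds ] = Γ·Ψ + Π, where Γ := a·b·|v-w|² - (p(a)-p(b))·(a-b), Ψ := (a+b)/(2(a-b)²) - a·b·(ln a - ln b)/(a-b)³, and Π := (p(a)+p(b))/2 - (a·b/(a-b))·∫_b^a p(s)/s² ds. -/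
open intervalIntegral

lemma conv_pos {a b : ℝ} (ha : 0 < a) (hb : 0 < b) {s : ℝ} (hs : s ∈ Set.uIcc (0:ℝ) 1) :
    0 < s * a + (1 - s) * b := by
  rw [Set.uIcc_of_le zero_le_one] at hs
  obtain ⟨h0, h1⟩ := hs
  rcases eq_or_lt_of_le h0 with h | h
  · simpa [← h] using hb
  · nlinarith [mul_pos h ha, mul_nonneg (by linarith : (0:ℝ) ≤ 1 - s) hb.le]

lemma conv_deriv (a b s : ℝ) :
    HasDerivAt (fun s : ℝ => s * a + (1 - s) * b) (a - b) s := by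
  have : HasDerivAt (fun s : ℝ => s * a + (1 - s) * b) (1 * a + (0 - 1) * b) s :=
    ((hasDerivAt_id s).mul_const a).add
      (((hasDerivAt_const s (1:ℝ)).sub (hasDerivAt_id s)).mul_const b)
  convert this using 1; ring

lemma int1 {a b : ℝ} (ha : 0 < a) (hb : 0 < b) (hab : a ≠ b) :
    ∫ s in (0:ℝ)..1, s * (1 - s) / (s * a + (1 - s) * b) ^ 3
      = ((a + b) * (a - b) / (2 * a * b) - (Real.log a - Real.log b)) / (a - b) ^ 3 := by
  have hk : a - b ≠ 0 := sub_ne_zero.mpr hab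
  have key := intervalIntegral.integral_eq_sub_of_hasDerivAt (a := (0:ℝ)) (b := 1)
    (f := fun s => (-(a + b) / (s * a + (1 - s) * b) + a * b / (2 * (s * a + (1 - s) * b) ^ 2)
      - Real.log (s * a + (1 - s) * b)) / (a - b) ^ 3)
    (f' := fun s => s * (1 - s) / (s * a + (1 - s) * b) ^ 3) ?_ ?_
  · rw [key]
    norm_num
    field_simp
    ring
  · intro s hs
    have hcs : 0 < s * a + (1 - s) * b := conv_pos ha hb hs
    have hc : HasDerivAt (fun s : ℝ => s * a + (1 - s) * b) (a - b) s := conv_deriv a b s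
    have h1 : HasDerivAt (fun s : ℝ => -(a + b) / (s * a + (1 - s) * b))
        ((0 * (s * a + (1 - s) * b) - (-(a + b)) * (a - b)) / (s * a + (1 - s) * b) ^ 2) s :=
      (hasDerivAt_const s (-(a + b))).div hc hcs.ne'
    have hd2 : HasDerivAt (fun s : ℝ => 2 * (s * a + (1 - s) * b) ^ 2)
        (2 * (2 * (s * a + (1 - s) * b) ^ 1 * (a - b))) s := (hc.pow 2).const_mul 2
    have h2 : HasDerivAt (fun s : ℝ => a * b / (2 * (s * a + (1 - s) * b) ^ 2))
        ((0 * (2 * (s * a + (1 - s) * b) ^ 2) - a * b * (2 * (2 * (s * a + (1 - s) * b) ^ 1 * (a - b))))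
          / (2 * (s * a + (1 - s) * b) ^ 2) ^ 2) s :=
      (hasDerivAt_const s (a * b)).div hd2 (by positivity)
    have h3 : HasDerivAt (fun s : ℝ => Real.log (s * a + (1 - s) * b))
        ((a - b) / (s * a + (1 - s) * b)) s := by
      simpa [div_eq_mul_inv, mul_comm] using hc.log hcs.ne'
    have H := ((h1.add h2).sub h3).div_const ((a - b) ^ 3)
    refine H.congr_deriv ?_
    field_simp
    ring
  · apply ContinuousOn.intervalIntegrable
    apply ContinuousOn.div
    · exact (Continuous.continuousOn (by continuity))
    · exact (Continuous.continuousOn (by continuity))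
    · intro s hs
      exact pow_ne_zero _ (conv_pos ha hb hs).ne'

lemma int2a {a b : ℝ} (ha : 0 < a) (hb : 0 < b) (hab : a ≠ b) (pa pb : ℝ) :
    ∫ s in (0:ℝ)..1, (s * pa + (1 - s) * pb) / (s * a + (1 - s) * b) ^ 2
      = ((pa - pb) * (Real.log a - Real.log b) + (a - b) / (a * b) * (a * pb - b * pa))
          / (a - b) ^ 2 := by
  have hk : a - b ≠ 0 := sub_ne_zero.mpr hab
  have key := intervalIntegral.integral_eq_sub_of_hasDerivAt (a := (0:ℝ)) (b := 1)
    (f := fun s => (pa * (Real.log (s * a + (1 - s) * b) + b / (s * a + (1 - s) * b))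
      + pb * (-(a / (s * a + (1 - s) * b)) - Real.log (s * a + (1 - s) * b))) / (a - b) ^ 2)
    (f' := fun s => (s * pa + (1 - s) * pb) / (s * a + (1 - s) * b) ^ 2) ?_ ?_
  · rw [key]
    norm_num
    field_simp
    ring
  · intro s hs
    have hcs : 0 < s * a + (1 - s) * b := conv_pos ha hb hs
    have hc : HasDerivAt (fun s : ℝ => s * a + (1 - s) * b) (a - b) s := conv_deriv a b s
    have hlog : HasDerivAt (fun s : ℝ => Real.log (s * a + (1 - s) * b))
        ((a - b) / (s * a + (1 - s) * b)) s := by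
      simpa [div_eq_mul_inv, mul_comm] using hc.log hcs.ne'
    have hbc : HasDerivAt (fun s : ℝ => b / (s * a + (1 - s) * b))
        ((0 * (s * a + (1 - s) * b) - b * (a - b)) / (s * a + (1 - s) * b) ^ 2) s :=
      (hasDerivAt_const s b).div hc hcs.ne'
    have hac : HasDerivAt (fun s : ℝ => a / (s * a + (1 - s) * b))
        ((0 * (s * a + (1 - s) * b) - a * (a - b)) / (s * a + (1 - s) * b) ^ 2) s :=
      (hasDerivAt_const s a).div hc hcs.ne'
    have H := (((hlog.add hbc).const_mul pa).add ((hac.neg.sub hlog).const_mul pb)).div_const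
      ((a - b) ^ 2)
    refine H.congr_deriv ?_
    field_simp
    ring
  · apply ContinuousOn.intervalIntegrable
    apply ContinuousOn.div
    · exact (Continuous.continuousOn (by continuity))
    · exact (Continuous.continuousOn (by continuity))
    · intro s hs
      exact pow_ne_zero _ (conv_pos ha hb hs).ne'

lemma int2b {a b : ℝ} (ha : 0 < a) (hb : 0 < b) (p : ℝ → ℝ) (hp : Continuous p) :
    ∫ s in (0:ℝ)..1, (a - b) * (p (s * a + (1 - s) * b) / (s * a + (1 - s) * b) ^ 2)
      = ∫ u in b..a, p u / u ^ 2 := by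
  have h := intervalIntegral.integral_comp_smul_deriv' (a := (0:ℝ)) (b := 1)
    (f := fun s => s * a + (1 - s) * b) (f' := fun _ => a - b) (g := fun u => p u / u ^ 2)
    (fun s _ => conv_deriv a b s) continuousOn_const ?_
  · have h01 : ((fun s : ℝ => s * a + (1 - s) * b) 0 : ℝ) = b := by norm_num
    have h11 : ((fun s : ℝ => s * a + (1 - s) * b) 1 : ℝ) = a := by norm_num
    simp only [zero_mul, sub_zero, one_mul, zero_add, sub_self, add_zero] at h
    rw [← h]
    congr 1
  · apply ContinuousOn.div
    · exact hp.continuousOn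
    · exact (Continuous.continuousOn (by continuity))
    · rintro u ⟨s, hs, rfl⟩
      exact pow_ne_zero _ (conv_pos ha hb hs).ne'

theorem dissipation_density_decomposition (d : ℕ) (a b : ℝ) (ha : 0 < a) (hb : 0 < b)
    (hab : a ≠ b) (v w : EuclideanSpace ℝ (Fin d)) (p : ℝ → ℝ) (hp : Continuous p) :
    a * b * (a * b * ‖v - w‖ ^ 2 *
        (∫ s in (0:ℝ)..1, s * (1 - s) / (s * a + (1 - s) * b) ^ 3)
      + ∫ s in (0:ℝ)..1,
          (s * p a + (1 - s) * p b - p (s * a + (1 - s) * b)) / (s * a + (1 - s) * b) ^ 2)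
    = (a * b * ‖v - w‖ ^ 2 - (p a - p b) * (a - b)) *
        ((a + b) / (2 * (a - b) ^ 2) - a * b * (Real.log a - Real.log b) / (a - b) ^ 3)
      + ((p a + p b) / 2 - (a * b / (a - b)) * ∫ s in b..a, p s / s ^ 2) := by
  have hk : a - b ≠ 0 := sub_ne_zero.mpr hab
  have hif1 : IntervalIntegrable
      (fun s => (s * p a + (1 - s) * p b) / (s * a + (1 - s) * b) ^ 2) MeasureTheory.volume 0 1 := by
    apply ContinuousOn.intervalIntegrable
    apply ContinuousOn.div
    · exact (Continuous.continuousOn (by continuity))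
    · exact (Continuous.continuousOn (by continuity))
    · intro s hs
      exact pow_ne_zero _ (conv_pos ha hb hs).ne'
  have hif2 : IntervalIntegrable
      (fun s => p (s * a + (1 - s) * b) / (s * a + (1 - s) * b) ^ 2) MeasureTheory.volume 0 1 := by
    apply ContinuousOn.intervalIntegrable
    apply ContinuousOn.div
    · exact (hp.comp (by continuity)).continuousOn
    · exact (Continuous.continuousOn (by continuity))
    · intro s hs
      exact pow_ne_zero _ (conv_pos ha hb hs).ne'
  have hsplit : (∫ s in (0:ℝ)..1,
        (s * p a + (1 - s) * p b - p (s * a + (1 - s) * b)) / (s * a + (1 - s) * b) ^ 2)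
      = (∫ s in (0:ℝ)..1, (s * p a + (1 - s) * p b) / (s * a + (1 - s) * b) ^ 2)
        - ∫ s in (0:ℝ)..1, p (s * a + (1 - s) * b) / (s * a + (1 - s) * b) ^ 2 := by
    rw [← intervalIntegral.integral_sub hif1 hif2]
    congr 1
    ext s
    rw [sub_div]
  have h2b : (∫ s in (0:ℝ)..1, p (s * a + (1 - s) * b) / (s * a + (1 - s) * b) ^ 2)
      = (∫ u in b..a, p u / u ^ 2) / (a - b) := by
    rw [← int2b ha hb p hp, intervalIntegral.integral_const_mul]
    field_simp
    congr 1; ext x; ring_nf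
  rw [hsplit, h2b, int1 ha hb hab, int2a ha hb hab (p a) (p b)]
  field_simp
  ring
end

section
/- Let ρ⁺, ρ⁻ > 0 and u⁺, u⁻ ∈ ℝ^d, n ∈ ℝ^d a unit vector, and p⁺, p⁻ ∈ ℝ. Suppose ρ⁺·(u⁺·n) = ρ⁻·(u⁻·n) and ρ⁺·(u⁺·n)·(u⁺ - u⁻) = -(p⁺ - p⁻)·n, with ρ⁺·(u⁺·n) ≠ 0. Then ρ⁺·ρ⁻·|u⁺ - u⁻|² - (p⁺ - p⁻)·(ρ⁺ - ρ⁻) = 0. -/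
open RealInnerProductSpace

theorem Gamma_vanishes_on_shocks (d : ℕ) (ρp ρm : ℝ) (hρp : 0 < ρp) (hρm : 0 < ρm)
    (up um n : EuclideanSpace ℝ (Fin d)) (hn : ‖n‖ = 1) (pp pm : ℝ)
    (hmass : ρp * ⟪up, n⟫ = ρm * ⟪um, n⟫)
    (hmom : (ρp * ⟪up, n⟫) • (up - um) = -((pp - pm) • n))
    (hne : ρp * ⟪up, n⟫ ≠ 0) :
    ρp * ρm * ‖up - um‖ ^ 2 - (pp - pm) * (ρp - ρm) = 0 := by
  set j := ρp * ⟪up, n⟫ with hj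
  have h1 : up - um = -((((pp - pm) / j)) • n) := by
    have := congrArg (fun v : EuclideanSpace ℝ (Fin d) => j⁻¹ • v) hmom
    simpa [smul_smul, inv_mul_cancel₀ hne, div_eq_mul_inv, mul_comm] using this
  have hn2 : ⟪n, n⟫ = (1 : ℝ) := by
    rw [real_inner_self_eq_norm_sq, hn]; norm_num
  have hnorm : ‖up - um‖ ^ 2 = ((pp - pm) / j) ^ 2 := by
    rw [h1, norm_neg, norm_smul, hn, Real.norm_eq_abs, mul_one, sq_abs]
  have hinner : ⟪up, n⟫ - ⟪um, n⟫ = -((pp - pm) / j) := by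
    have h2 : ⟪up - um, n⟫ = ⟪(-((((pp - pm) / j)) • n) : EuclideanSpace ℝ (Fin d)), n⟫ := by
      rw [h1]
    rwa [inner_sub_left, inner_neg_left, real_inner_smul_left, hn2, mul_one] at h2
  have hρp' := hρp.ne'
  have hρm' := hρm.ne'
  have hupn : ⟪up, n⟫ = j / ρp := by field_simp [hj]; rw [hj]; ring
  have humn : ⟪um, n⟫ = j / ρm := by
    rw [eq_div_iff hρm']
    linear_combination -hmass
  rw [hnorm]
  rw [hupn, humn] at hinner
  field_simp at hinner ⊢
  linear_combination (pp - pm) * hinner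
end
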